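/- Let σ: ℝ → X be an (L,b)-quasi-isometric embedding into a metric space X, x₀ = σ(0), R₁ ≥ 2b(L²+2), t₁ = L(b+R₁). Set c₀ = 4/b and c₁ = 4(L²+1), and define ρ: X → [0,∞] by ρ(x) = c₀ if d(x,x₀) < R₁ and ρ(x) = c₁/d(x,x₀) otherwise. Then for every 1-Lipschitz curve γ: [0,ℓ] → X with γ(0) ∈ σ((−∞,−t₁]) and γ(ℓ) ∈ σ([t₁,∞)), one has ∫₀^ℓ ρ(γ(s)) ds ≥ 1. -/

import Mathlib

/-!
Both endpoints of `γ` lie at distance at least `R₁` from `x₀`. If `γ` enters the ball of radius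
`R₁ - b/4`, the `1`-Lipschitz curve spends time at least `b/4` in the ball of radius `R₁`, where
`ρ = 4/b`. Otherwise `ρ(γ s) ≥ c₁ / d(γ s, x₀)` along the whole curve, and since
`d(γ s, x₀) ≤ min (d₀ + s) (d_ℓ + ℓ - s)` the integral is at least `c₁ log (D² / (d₀ d_ℓ))`
with `D = (d₀ + d_ℓ + ℓ) / 2`. The quasi-isometry bounds give `d₀ + d_ℓ - 2b ≤ L² (ℓ + b)`, hence
`2D ≥ (1 + 3/(4L²)) (d₀ + d_ℓ)`, and AM-GM together with `log y ≥ 1 - 1/y` finishes.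
-/

open scoped ENNReal
open MeasureTheory Set Real

theorem LipschitzOnWith.dist_le_abs_sub {X : Type*} [PseudoMetricSpace X] {γ : ℝ → X}
    {s : Set ℝ} (hγ : LipschitzOnWith 1 γ s) {u v : ℝ} (hu : u ∈ s) (hv : v ∈ s) :
    dist (γ u) (γ v) ≤ |u - v| := by
  simpa [Real.dist_eq] using hγ.dist_le_mul u hu v hv

section QuasiIsometricEmbedding

variable {X : Type*} [PseudoMetricSpace X] {σ : ℝ → X} {L b : ℝ}

theorem le_dist_of_mul_add_le_abs_sub (hL : 0 < L)
    (hlow : ∀ t t' : ℝ, L⁻¹ * |t - t'| - b ≤ dist (σ t) (σ t')) {R t t' : ℝ}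
    (h : L * (b + R) ≤ |t - t'|) : R ≤ dist (σ t) (σ t') := by
  have : b + R ≤ L⁻¹ * |t - t'| := by rwa [le_inv_mul_iff₀ hL]
  linarith [hlow t t']

theorem dist_add_dist_sub_le_sq_mul (hL : 0 < L)
    (hlow : ∀ t t' : ℝ, L⁻¹ * |t - t'| - b ≤ dist (σ t) (σ t'))
    (hup : ∀ t t' : ℝ, dist (σ t) (σ t') ≤ L * |t - t'| + b) {t u t' : ℝ}
    (htu : t ≤ u) (hut : u ≤ t') :
    dist (σ t) (σ u) + dist (σ t') (σ u) - 2 * b ≤ L ^ 2 * (dist (σ t) (σ t') + b) := by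
  have h₁ := hup t u
  have h₂ := hup t' u
  rw [abs_of_nonpos (by linarith)] at h₁
  rw [abs_of_nonneg (by linarith)] at h₂
  have h₃ : t' - t ≤ L * (dist (σ t) (σ t') + b) := by
    have := hlow t' t
    rw [abs_of_nonneg (by linarith), dist_comm] at this
    rw [← inv_mul_le_iff₀ hL]
    linarith
  calc dist (σ t) (σ u) + dist (σ t') (σ u) - 2 * b ≤ L * (t' - t) := by linarith
    _ ≤ L * (L * (dist (σ t) (σ t') + b)) := by gcongr
    _ = L ^ 2 * (dist (σ t) (σ t') + b) := by ring

end QuasiIsometricEmbedding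

theorem one_le_mul_log_sq_div {L b d d' ℓ : ℝ} (hL : L ≠ 0) (hd : 0 < d) (hd' : 0 < d')
    (hsum : 4 * b * (L ^ 2 + 2) ≤ d + d') (hlen : d + d' - 2 * b ≤ L ^ 2 * (ℓ + b)) :
    1 ≤ 4 * (L ^ 2 + 1) * log (((d + d' + ℓ) / 2) ^ 2 / (d * d')) := by
  set k := 4 * L ^ 2
  set D := (d + d' + ℓ) / 2
  have hk0 : 0 < k := by positivity
  have hD : (k + 3) * (d + d') ≤ 2 * k * D := by linear_combination 4 * hlen + hsum
  have hamgm : (k + 3) ^ 2 * (4 * (d * d')) ≤ (2 * k * D) ^ 2 := by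
    calc (k + 3) ^ 2 * (4 * (d * d')) ≤ (k + 3) ^ 2 * (d + d') ^ 2 := by
          gcongr; linarith [four_mul_le_sq_add d d']
      _ = ((k + 3) * (d + d')) ^ 2 := by ring
      _ ≤ (2 * k * D) ^ 2 := by gcongr
  have hDpos : 0 < D ^ 2 := by
    have : 0 < D := by nlinarith
    positivity
  have hkey : (k + 4) * (d * d') ≤ (k + 3) * D ^ 2 := by
    refine le_of_mul_le_mul_left ?_ (by positivity : 0 < (k + 3) ^ 2)
    nlinarith [mul_pos hd hd']
  have hlog := one_sub_inv_le_log_of_pos (by positivity : 0 < D ^ 2 / (d * d'))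
  rw [inv_div] at hlog
  calc 1 ≤ (k + 4) * (1 - d * d' / D ^ 2) := by
        rw [mul_one_sub, mul_div_assoc', le_sub_iff_add_le, ← le_sub_iff_add_le',
          div_le_iff₀ hDpos]
        linarith
    _ ≤ (k + 4) * log (D ^ 2 / (d * d')) := by gcongr
    _ = 4 * (L ^ 2 + 1) * log (D ^ 2 / (d * d')) := by ring

theorem integral_div_add {a c m : ℝ} (ha : 0 < a) (hm : 0 ≤ m) :
    ∫ s in (0 : ℝ)..m, c / (a + s) = c * log ((a + m) / a) := by
  simp only [div_eq_mul_inv c]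
  rw [intervalIntegral.integral_const_mul, intervalIntegral.integral_comp_add_left (·⁻¹),
    add_zero, integral_inv_of_pos ha (by linarith)]

theorem ofReal_intervalIntegral_le_setLIntegral_Ioc {f : ℝ → ℝ} {g : ℝ → ℝ≥0∞} {a b : ℝ}
    (hab : a ≤ b) (hf : ContinuousOn f (Icc a b)) (hf₀ : ∀ s ∈ Ioc a b, 0 ≤ f s)
    (hfg : ∀ s ∈ Ioc a b, ENNReal.ofReal (f s) ≤ g s) :
    ENNReal.ofReal (∫ s in a..b, f s) ≤ ∫⁻ s in Ioc a b, g s := by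
  rw [intervalIntegral.integral_of_le hab, ofReal_integral_eq_lintegral_ofReal
    (hf.integrableOn_Icc.mono_set Ioc_subset_Icc_self)
    ((ae_restrict_iff' measurableSet_Ioc).2 (ae_of_all _ hf₀))]
  exact setLIntegral_mono' measurableSet_Ioc hfg

section Curve

variable {X : Type*} [PseudoMetricSpace X] {γ : ℝ → X} {x₀ : X} {ℓ : ℝ}

theorem Ioc_subset_inter_preimage_ball (hγ : LipschitzOnWith 1 γ (Icc 0 ℓ)) {R r s : ℝ}
    (h₀ : R ≤ dist (γ 0) x₀) (hs : s ∈ Icc 0 ℓ) (hsR : dist (γ s) x₀ ≤ R - r) :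
    Ioc (s - r) s ⊆ Icc 0 ℓ ∩ γ ⁻¹' Metric.ball x₀ R := by
  have hrs : r ≤ s := by
    have := hγ.dist_le_abs_sub (left_mem_Icc.2 (hs.1.trans hs.2)) hs
    rw [zero_sub, abs_neg, abs_of_nonneg hs.1] at this
    linarith [dist_triangle (γ 0) (γ s) x₀]
  intro u hu
  have hu' : u ∈ Icc 0 ℓ := ⟨by linarith [hu.1], hu.2.trans hs.2⟩
  refine ⟨hu', ?_⟩
  have := hγ.dist_le_abs_sub hu' hs
  rw [abs_of_nonpos (by linarith [hu.2])] at this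
  show dist (γ u) x₀ < R
  linarith [dist_triangle (γ u) (γ s) x₀, hu.1]

theorem mul_ofReal_le_setLIntegral_of_dist_le (hγ : LipschitzOnWith 1 γ (Icc 0 ℓ))
    {f : X → ℝ≥0∞} {c : ℝ≥0∞} {R r s : ℝ} (hf : ∀ x ∈ Metric.ball x₀ R, c ≤ f x)
    (h₀ : R ≤ dist (γ 0) x₀) (hs : s ∈ Icc 0 ℓ) (hsR : dist (γ s) x₀ ≤ R - r) :
    c * ENNReal.ofReal r ≤ ∫⁻ u in Icc 0 ℓ, f (γ u) := by
  have hsub := Ioc_subset_inter_preimage_ball hγ h₀ hs hsR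
  calc c * ENNReal.ofReal r = ∫⁻ _ in Ioc (s - r) s, c := by
        rw [setLIntegral_const, Real.volume_Ioc, sub_sub_cancel]
    _ ≤ ∫⁻ u in Ioc (s - r) s, f (γ u) :=
        setLIntegral_mono' measurableSet_Ioc fun u hu => hf _ (hsub hu).2
    _ ≤ ∫⁻ u in Icc 0 ℓ, f (γ u) := lintegral_mono_set (hsub.trans inter_subset_left)

theorem ofReal_mul_log_le_setLIntegral_div_dist (hγ : LipschitzOnWith 1 γ (Icc 0 ℓ))
    (hℓ : 0 ≤ ℓ) {c : ℝ} (hc : 0 ≤ c) (hpos : ∀ s ∈ Icc 0 ℓ, 0 < dist (γ s) x₀) :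
    ENNReal.ofReal (c * log (((dist (γ 0) x₀ + dist (γ ℓ) x₀ + ℓ) / 2) ^ 2 /
        (dist (γ 0) x₀ * dist (γ ℓ) x₀))) ≤
      ∫⁻ s in Icc 0 ℓ, ENNReal.ofReal (c / dist (γ s) x₀) := by
  set a := dist (γ 0) x₀
  set a' := dist (γ ℓ) x₀
  set D := (a + a' + ℓ) / 2
  set m := (a' + ℓ - a) / 2 with hm
  have h₀ : (0 : ℝ) ∈ Icc 0 ℓ := left_mem_Icc.2 hℓ
  have hℓ' : ℓ ∈ Icc 0 ℓ := right_mem_Icc.2 hℓ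
  have hfwd : ∀ s ∈ Icc 0 ℓ, dist (γ s) x₀ ≤ a + s := fun s hs => by
    have := hγ.dist_le_abs_sub hs h₀
    rw [sub_zero, abs_of_nonneg hs.1] at this
    linarith [dist_triangle (γ s) (γ 0) x₀]
  have hbwd : ∀ s ∈ Icc 0 ℓ, dist (γ s) x₀ ≤ a' + (ℓ - s) := fun s hs => by
    have := hγ.dist_le_abs_sub hs hℓ'
    rw [abs_of_nonpos (by linarith [hs.2])] at this
    linarith [dist_triangle (γ s) (γ ℓ) x₀]
  have ha := hpos 0 h₀
  have ha' := hpos ℓ hℓ'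
  have hm₀ : 0 ≤ m := by linarith [(hbwd 0 h₀ : a ≤ a' + (ℓ - 0)), hm]
  have hmℓ : m ≤ ℓ := by linarith [(hfwd ℓ hℓ' : a' ≤ a + ℓ), hm]
  have hfirst : ENNReal.ofReal (c * log (D / a)) ≤
      ∫⁻ s in Ioc 0 m, ENNReal.ofReal (c / dist (γ s) x₀) := by
    rw [show D = a + m by ring, ← integral_div_add ha hm₀]
    refine ofReal_intervalIntegral_le_setLIntegral_Ioc hm₀ ?_ (fun s hs => ?_) fun s hs => ?_
    · exact continuousOn_const.div (by fun_prop) fun s hs => by linarith [hs.1]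
    · have := hs.1.le; positivity
    · have hs' : s ∈ Icc 0 ℓ := ⟨hs.1.le, hs.2.trans hmℓ⟩
      exact ENNReal.ofReal_le_ofReal (div_le_div_of_nonneg_left hc (hpos s hs') (hfwd s hs'))
  have hsecond : ENNReal.ofReal (c * log (D / a')) ≤
      ∫⁻ s in Ioc m ℓ, ENNReal.ofReal (c / dist (γ s) x₀) := by
    have : ∫ s in m..ℓ, c / (a' + (ℓ - s)) = c * log (D / a') := by
      rw [intervalIntegral.integral_comp_sub_left (fun x => c / (a' + x)), sub_self,
        integral_div_add ha' (by linarith), show a' + (ℓ - m) = D by ring]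
    rw [← this]
    refine ofReal_intervalIntegral_le_setLIntegral_Ioc hmℓ ?_ (fun s hs => ?_) fun s hs => ?_
    · exact continuousOn_const.div (by fun_prop) fun s hs => by linarith [hs.2]
    · have := sub_nonneg.2 hs.2; positivity
    · have hs' : s ∈ Icc 0 ℓ := ⟨hm₀.trans hs.1.le, hs.2⟩
      exact ENNReal.ofReal_le_ofReal (div_le_div_of_nonneg_left hc (hpos s hs') (hbwd s hs'))
  calc ENNReal.ofReal (c * log (D ^ 2 / (a * a')))
      = ENNReal.ofReal (c * log (D / a) + c * log (D / a')) := by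
        rw [← mul_add, ← log_mul (by positivity) (by positivity)]
        congr 3
        field_simp
    _ ≤ ENNReal.ofReal (c * log (D / a)) + ENNReal.ofReal (c * log (D / a')) :=
        ENNReal.ofReal_add_le
    _ ≤ ∫⁻ s in Ioc 0 ℓ, ENNReal.ofReal (c / dist (γ s) x₀) := by
        rw [← Ioc_union_Ioc_eq_Ioc hm₀ hmℓ,
          lintegral_union measurableSet_Ioc (Ioc_disjoint_Ioc_of_le le_rfl)]
        exact add_le_add hfirst hsecond
    _ ≤ ∫⁻ s in Icc 0 ℓ, ENNReal.ofReal (c / dist (γ s) x₀) :=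
        lintegral_mono_set Ioc_subset_Icc_self

end Curve

theorem stmt_3 {X : Type*} [MetricSpace X] (σ : ℝ → X) (L b R₁ : ℝ)
    (hL : 1 ≤ L) (hb : 0 < b) (hR₁ : 2 * b * (L ^ 2 + 2) ≤ R₁)
    (hlow : ∀ t t' : ℝ, L⁻¹ * |t - t'| - b ≤ dist (σ t) (σ t'))
    (hup : ∀ t t' : ℝ, dist (σ t) (σ t') ≤ L * |t - t'| + b)
    (x₀ : X) (hx₀ : x₀ = σ 0) (t₁ : ℝ) (ht₁ : t₁ = L * (b + R₁))
    (c₀ c₁ : ℝ) (hc₀ : c₀ = 4 / b) (hc₁ : c₁ = 4 * (L ^ 2 + 1))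
    (ρ : X → ℝ≥0∞)
    (hρ : ∀ x : X, ρ x = if dist x x₀ < R₁ then ENNReal.ofReal c₀
        else ENNReal.ofReal (c₁ / dist x x₀))
    (ℓ : ℝ) (hℓ : 0 ≤ ℓ) (γ : ℝ → X)
    (hγlip : LipschitzOnWith 1 γ (Set.Icc 0 ℓ))
    (hγ0 : γ 0 ∈ σ '' Set.Iic (-t₁)) (hγℓ : γ ℓ ∈ σ '' Set.Ici t₁) :
    1 ≤ ∫⁻ s in Set.Icc 0 ℓ, ρ (γ s) := by
  subst hx₀ ht₁ hc₀ hc₁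
  obtain ⟨t, ht : t ≤ _, hσt⟩ := hγ0
  obtain ⟨t', ht' : _ ≤ t', hσt'⟩ := hγℓ
  have hL₀ : 0 < L := by linarith
  have hR₁₀ : 4 * b ≤ R₁ := by nlinarith [sq_nonneg L]
  have hLbR : 0 < L * (b + R₁) := mul_pos hL₀ (by linarith)
  have hd₀ : R₁ ≤ dist (γ 0) (σ 0) :=
    hσt ▸ le_dist_of_mul_add_le_abs_sub hL₀ hlow (le_abs.2 (Or.inr (by linarith)))
  have hdℓ : R₁ ≤ dist (γ ℓ) (σ 0) :=
    hσt' ▸ le_dist_of_mul_add_le_abs_sub hL₀ hlow (le_abs.2 (Or.inl (by linarith)))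
  by_cases hnear : ∃ s ∈ Icc 0 ℓ, dist (γ s) (σ 0) ≤ R₁ - b / 4
  · obtain ⟨s, hs, hsR⟩ := hnear
    calc 1 = ENNReal.ofReal (4 / b) * ENNReal.ofReal (b / 4) := by
          rw [← ENNReal.ofReal_mul (by positivity), div_mul_div_cancel₀ hb.ne',
            div_self four_ne_zero, ENNReal.ofReal_one]
      _ ≤ _ := mul_ofReal_le_setLIntegral_of_dist_le hγlip
          (fun x hx => by rw [hρ, if_pos (Metric.mem_ball.1 hx)]) hd₀ hs hsR
  · push Not at hnear
    have hγ0ℓ := hγlip.dist_le_abs_sub (left_mem_Icc.2 hℓ) (right_mem_Icc.2 hℓ)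
    rw [zero_sub, abs_neg, abs_of_nonneg hℓ] at hγ0ℓ
    have hlen : dist (γ 0) (σ 0) + dist (γ ℓ) (σ 0) - 2 * b ≤ L ^ 2 * (ℓ + b) :=
      calc _ ≤ L ^ 2 * (dist (γ 0) (γ ℓ) + b) := hσt ▸ hσt' ▸
            dist_add_dist_sub_le_sq_mul hL₀ hlow hup (by linarith) (by linarith)
        _ ≤ L ^ 2 * (ℓ + b) := by gcongr
    set d₀ := dist (γ 0) (σ 0)
    set dℓ := dist (γ ℓ) (σ 0)
    calc 1 ≤ ENNReal.ofReal (4 * (L ^ 2 + 1) * log (((d₀ + dℓ + ℓ) / 2) ^ 2 / (d₀ * dℓ))) := by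
          rw [← ENNReal.ofReal_one]
          exact ENNReal.ofReal_le_ofReal (one_le_mul_log_sq_div hL₀.ne' (by linarith)
            (by linarith) (by linarith) hlen)
      _ ≤ ∫⁻ s in Icc 0 ℓ, ENNReal.ofReal (4 * (L ^ 2 + 1) / dist (γ s) (σ 0)) :=
          ofReal_mul_log_le_setLIntegral_div_dist hγlip hℓ (by positivity)
            fun s hs => by linarith [hnear s hs]
      _ ≤ _ := setLIntegral_mono' measurableSet_Icc fun s hs => by
          have hd := hnear s hs
          rw [hρ]
          split_ifs
          · exact ENNReal.ofReal_le_ofReal <|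
              (div_le_div_iff₀ (by linarith) hb).2 (by nlinarith [sq_nonneg L])
          · exact le_rfl
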